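/- For every n ≥ 5, the 2-swap game with n−2 strategic red agents and 2 strategic blue agents on the star topology with n nodes admits an equilibrium assignment v (one blue agent at the center) with SW(v) = 1 + 1/(n−1) ≤ 2, while the assignment v* with a red agent at the center satisfies SW(v*) = n−3 + (n−3)/(n−1) ≥ n−3. Hence the social price of anarchy of 2-swap games with only strategic agents and at least two agents per type is at least (n−3)/2 = Ω(n). -/

import Mathlib

open Finset

namespace SwapGame

/-- Build a simple graph from a (not necessarily symmetric) boolean relation
by symmetrizing it and removing loops. -/
def mkGraph {V : Type*} (r : V → V → Bool) : SimpleGraph V where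
  Adj a b := a ≠ b ∧ (r a b ∨ r b a)
  symm := ⟨fun a b h => ⟨Ne.symm h.1, Or.symm h.2⟩⟩
  loopless := ⟨fun a h => h.1 rfl⟩

instance mkGraph.instDecidableRel {V : Type*} [DecidableEq V] (r : V → V → Bool) :
    DecidableRel (mkGraph r).Adj :=
  fun a b => inferInstanceAs (Decidable (a ≠ b ∧ (r a b ∨ r b a)))

variable {A V K : Type*} [Fintype V] [DecidableEq A] [DecidableEq V] [DecidableEq K]

/-- The assignment obtained from `σ` by swapping the locations of agents `i` and `j`. -/
def swapA (σ : A ≃ V) (i j : A) : A ≃ V := (Equiv.swap i j).trans σ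

/-- The utility of agent `i` under assignment `σ`: the fraction of the neighbors of the
node of `i` that are occupied by agents of the same type (friends of `i`). -/
def util (G : SimpleGraph V) [DecidableRel G.Adj] (c : A → K) (σ : A ≃ V) (i : A) : ℚ :=
  (((G.neighborFinset (σ i)).filter (fun w => c (σ.symm w) = c i)).card : ℚ) /
    ((G.neighborFinset (σ i)).card : ℚ)

/-- Agents `i` and `j` both strictly increase their utility by swapping their locations. -/
def improving (G : SimpleGraph V) [DecidableRel G.Adj] (c : A → K) (σ : A ≃ V)
    (i j : A) : Prop :=
  util G c σ i < util G c (swapA σ i j) i ∧ util G c σ j < util G c (swapA σ i j) j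

/-- An assignment is an equilibrium if no pair of agents can both strictly increase
their utility by swapping positions. -/
def isEquilibrium (G : SimpleGraph V) [DecidableRel G.Adj] (c : A → K) (σ : A ≃ V) : Prop :=
  ¬ ∃ i j : A, improving G c σ i j

/-- The social welfare of an assignment: the sum of the utilities of all agents. -/
def SW [Fintype A] (G : SimpleGraph V) [DecidableRel G.Adj] (c : A → K) (σ : A ≃ V) : ℚ :=
  ∑ i : A, util G c σ i

/-- Agent `i` is exposed: at least one neighbor is occupied by an agent of another type. -/
def exposed (G : SimpleGraph V) [DecidableRel G.Adj] (c : A → K) (σ : A ≃ V) (i : A) : Prop :=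
  ((G.neighborFinset (σ i)).filter (fun w => c (σ.symm w) ≠ c i)).Nonempty

instance exposed.instDecidable (G : SimpleGraph V) [DecidableRel G.Adj] (c : A → K)
    (σ : A ≃ V) : DecidablePred (exposed G c σ) :=
  fun _ => inferInstanceAs (Decidable (Finset.Nonempty _))

/-- The degree of integration of an assignment: the number of exposed agents. -/
def DI [Fintype A] (G : SimpleGraph V) [DecidableRel G.Adj] (c : A → K) (σ : A ≃ V) : ℕ :=
  (univ.filter (fun i : A => exposed G c σ i)).card

end SwapGame

namespace SwapGame

/-- The star topology on `n` nodes: node `0` is the center, adjacent to all other nodes. -/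
abbrev Star (n : ℕ) : SimpleGraph (Fin n) := mkGraph (fun a _ => decide ((a : ℕ) = 0))

/-- Agents: `n − 2` red agents and `2` blue agents. -/
abbrev A7 (n : ℕ) := Fin (n - 2) ⊕ Fin 2

/-- The type (color) of each agent: `0` = red, `1` = blue. -/
def c7 (n : ℕ) : A7 n → Fin 2 := Sum.elim (fun _ => 0) (fun _ => 1)

/-!
On a star a leaf has utility `1` or `0` according as it shares the type of the center agent, and
the center has as utility the fraction of leaves that do. So the welfare only depends on the
size `m` of the center agent's type, `SW = (m - 1) (1 + 1/(n - 1))`: this is `1 + 1/(n - 1)` for a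
blue and `(n - 3) (1 + 1/(n - 1))` for a red center. Moreover no swap on a star is improving, so
every assignment is an equilibrium.
-/

section Swap

variable {A V : Type*} [DecidableEq A]

lemma swapA_apply_left (σ : A ≃ V) (i j : A) : swapA σ i j i = σ j := by
  simp [swapA]

lemma swapA_symm_apply (σ : A ≃ V) (i j : A) (w : V) :
    (swapA σ i j).symm w = Equiv.swap i j (σ.symm w) := by
  simp [swapA]

lemma swapA_self (σ : A ≃ V) (i : A) : swapA σ i i = σ := by
  simp [swapA]

lemma swapA_comm (σ : A ≃ V) (i j : A) : swapA σ i j = swapA σ j i := by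
  simp [swapA, Equiv.swap_comm]

end Swap

section Utility

variable {A V K : Type*} [Fintype V] [DecidableEq K]

lemma improving.symm [DecidableEq A] [DecidableEq V] {G : SimpleGraph V} [DecidableRel G.Adj]
    {c : A → K} {σ : A ≃ V} {i j : A} (h : improving G c σ i j) : improving G c σ j i := by
  rw [improving, swapA_comm]
  exact ⟨h.2, h.1⟩

lemma util_nonneg (G : SimpleGraph V) [DecidableRel G.Adj] (c : A → K) (σ : A ≃ V) (i : A) :
    0 ≤ util G c σ i := by
  unfold util
  positivity

lemma util_le_one (G : SimpleGraph V) [DecidableRel G.Adj] (c : A → K) (σ : A ≃ V) (i : A) :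
    util G c σ i ≤ 1 :=
  div_le_one_of_le₀ (by exact_mod_cast card_filter_le _ _) (Nat.cast_nonneg _)

end Utility

section Star

variable {A K : Type*} [DecidableEq K] {n : ℕ}

lemma star_adj (a b : Fin n) : (Star n).Adj a b ↔ a ≠ b ∧ ((a : ℕ) = 0 ∨ (b : ℕ) = 0) := by
  simp [mkGraph]

lemma star_neighborFinset_center (h : 0 < n) :
    (Star n).neighborFinset ⟨0, h⟩ = univ.erase ⟨0, h⟩ := by
  ext w
  simp only [SimpleGraph.mem_neighborFinset, star_adj, mem_erase, mem_univ, and_true, ne_eq,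
    Fin.ext_iff, true_or]
  omega

lemma star_neighborFinset_of_ne_center (h : 0 < n) {x : Fin n} (hx : x ≠ ⟨0, h⟩) :
    (Star n).neighborFinset x = {⟨0, h⟩} := by
  replace hx : (x : ℕ) ≠ 0 := fun e => hx (Fin.ext e)
  ext w
  simp only [SimpleGraph.mem_neighborFinset, star_adj, mem_singleton, ne_eq, Fin.ext_iff]
  omega

lemma util_star_of_ne_center (h : 0 < n) (c : A → K) (σ : A ≃ Fin n) {i : A}
    (hi : σ i ≠ ⟨0, h⟩) :
    util (Star n) c σ i = if c (σ.symm ⟨0, h⟩) = c i then 1 else 0 := by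
  rw [util, star_neighborFinset_of_ne_center h hi, filter_singleton]
  split_ifs <;> simp

lemma util_star_center [Fintype A] [DecidableEq A] (h : 0 < n) (c : A → K) (σ : A ≃ Fin n) :
    util (Star n) c σ (σ.symm ⟨0, h⟩) =
      (#((univ.filter fun i => c i = c (σ.symm ⟨0, h⟩)).erase (σ.symm ⟨0, h⟩)) : ℚ) /
        ((n : ℚ) - 1) := by
  rw [util, Equiv.apply_symm_apply, star_neighborFinset_center h, card_erase_of_mem (mem_univ _),
    card_univ, Fintype.card_fin, Nat.cast_pred h, ← card_map σ.toEmbedding]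
  congr 3
  ext w
  simp [and_comm]

variable [DecidableEq A]

lemma not_improving_star_of_center (h : 0 < n) (c : A → K) (σ : A ≃ Fin n) {i : A}
    (hi : σ i = ⟨0, h⟩) (j : A) : ¬ improving (Star n) c σ i j := by
  rintro ⟨hi_lt, hj_lt⟩
  obtain rfl | hji := eq_or_ne j i
  · rw [swapA_self] at hi_lt
    exact hi_lt.false
  have hi₀ : σ.symm ⟨0, h⟩ = i := by rw [← hi, Equiv.symm_apply_apply]
  have hj : σ j ≠ ⟨0, h⟩ := hi ▸ σ.injective.ne hji
  by_cases hc : c i = c j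
  · rw [util_star_of_ne_center h c σ hj, hi₀, if_pos hc] at hj_lt
    exact (util_le_one _ _ _ _).not_gt hj_lt
  · have hi' : swapA σ i j i ≠ ⟨0, h⟩ := by rwa [swapA_apply_left]
    rw [util_star_of_ne_center h c _ hi', swapA_symm_apply, hi₀, Equiv.swap_apply_left,
      if_neg (Ne.symm hc)] at hi_lt
    exact (util_nonneg _ _ _ _).not_gt hi_lt

lemma not_improving_star_of_ne_center (h : 0 < n) (c : A → K) (σ : A ≃ Fin n) {i j : A}
    (hi : σ i ≠ ⟨0, h⟩) (hj : σ j ≠ ⟨0, h⟩) : ¬ improving (Star n) c σ i j := by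
  rintro ⟨hi_lt, -⟩
  have hi' : swapA σ i j i ≠ ⟨0, h⟩ := by rwa [swapA_apply_left]
  have hcenter : (swapA σ i j).symm ⟨0, h⟩ = σ.symm ⟨0, h⟩ := by
    rw [swapA_symm_apply]
    exact Equiv.swap_apply_of_ne_of_ne (by rintro rfl; simp at hi) (by rintro rfl; simp at hj)
  rw [util_star_of_ne_center h c σ hi, util_star_of_ne_center h c _ hi', hcenter] at hi_lt
  exact hi_lt.false

/-- A swap between two leaves changes no utility; the center agent only gains by moving next
to a friend, who then already has utility `1`. -/
theorem star_isEquilibrium (h : 0 < n) (c : A → K) (σ : A ≃ Fin n) :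
    isEquilibrium (Star n) c σ := by
  rintro ⟨i, j, hij⟩
  by_cases hi : σ i = ⟨0, h⟩
  · exact not_improving_star_of_center h c σ hi j hij
  by_cases hj : σ j = ⟨0, h⟩
  · exact not_improving_star_of_center h c σ hj i hij.symm
  exact not_improving_star_of_ne_center h c σ hi hj hij

theorem SW_star [Fintype A] (h : 0 < n) (c : A → K) (σ : A ≃ Fin n) :
    SW (Star n) c σ =
      ((#(univ.filter fun i => c i = c (σ.symm ⟨0, h⟩)) : ℚ) - 1) * (1 + 1 / ((n : ℚ) - 1)) := by
  set i₀ := σ.symm ⟨0, h⟩ with hi₀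
  have hleaves : ∑ i ∈ univ.erase i₀, util (Star n) c σ i =
      #((univ.filter fun i => c i = c i₀).erase i₀) := by
    rw [sum_congr rfl fun i hi => util_star_of_ne_center h c σ ?_, sum_boole, filter_erase]
    · simp_rw [← hi₀, eq_comm (a := c i₀)]
    · rintro hσi
      exact (mem_erase.mp hi).1 (by rw [hi₀, ← hσi, Equiv.symm_apply_apply])
  rw [SW, ← sum_erase_add _ _ (mem_univ i₀), hleaves, util_star_center,
    card_erase_of_mem (by simp), Nat.cast_pred (card_pos.mpr ⟨i₀, by simp⟩)]
  ring

omit [DecidableEq A] in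
lemma exists_equiv_fin_symm_apply_eq [Fintype A] (hA : Fintype.card A = n) (x : Fin n) (a : A) :
    ∃ σ : A ≃ Fin n, σ.symm x = a := by
  let e := Fintype.equivFinOfCardEq hA
  exact ⟨e.trans (Equiv.swap (e a) x), by simp⟩

end Star

lemma card_A7 (n : ℕ) (hn : 2 ≤ n) : Fintype.card (A7 n) = n := by
  simp
  omega

lemma card_c7_eq_zero (n : ℕ) : #(univ.filter fun i : A7 n => c7 n i = 0) = n - 2 := by
  rw [card_filter, Fintype.sum_sum_type]
  simp [c7]

lemma card_c7_eq_one (n : ℕ) : #(univ.filter fun i : A7 n => c7 n i = 1) = 2 := by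
  rw [card_filter, Fintype.sum_sum_type]
  simp [c7]

/-- for every `n ≥ 5`, the 2-swap game with `n − 2` strategic red agents
and `2` strategic blue agents on the `n`-node star admits an equilibrium with a blue
agent at the center, of social welfare `1 + 1/(n−1) ≤ 2`, while every assignment with a
red agent at the center has social welfare `n − 3 + (n−3)/(n−1) ≥ n − 3`; hence the
social price of anarchy of 2-swap games with only strategic agents and at least two
agents per type is at least `(n−3)/2 = Ω(n)`. -/
theorem star_poa_lower_bound (n : ℕ) (hn : 5 ≤ n) :
    (∃ σ : A7 n ≃ Fin n, c7 n (σ.symm ⟨0, by omega⟩) = 1 ∧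
        isEquilibrium (Star n) (c7 n) σ ∧
        SW (Star n) (c7 n) σ = 1 + 1 / ((n : ℚ) - 1)) ∧
    (1 + 1 / ((n : ℚ) - 1) ≤ 2) ∧
    (∀ σ : A7 n ≃ Fin n, c7 n (σ.symm ⟨0, by omega⟩) = 0 →
        SW (Star n) (c7 n) σ = ((n : ℚ) - 3) + ((n : ℚ) - 3) / ((n : ℚ) - 1)) ∧
    ((n : ℚ) - 3 ≤ ((n : ℚ) - 3) + ((n : ℚ) - 3) / ((n : ℚ) - 1)) ∧
    (∃ σ σ' : A7 n ≃ Fin n, isEquilibrium (Star n) (c7 n) σ ∧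
        ((n : ℚ) - 3) / 2 * SW (Star n) (c7 n) σ ≤ SW (Star n) (c7 n) σ') := by
  have h0 : 0 < n := by omega
  obtain ⟨σB, hσB⟩ := exists_equiv_fin_symm_apply_eq (card_A7 n (by omega)) ⟨0, h0⟩ (.inr 0)
  obtain ⟨σR, hσR⟩ := exists_equiv_fin_symm_apply_eq (card_A7 n (by omega)) ⟨0, h0⟩
    (.inl ⟨0, by omega⟩)
  have hSW_blue : SW (Star n) (c7 n) σB = 1 + 1 / ((n : ℚ) - 1) := by
    rw [SW_star h0, hσB, show c7 n (.inr 0) = 1 from rfl, card_c7_eq_one]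
    norm_num
  have hSW_red (σ : A7 n ≃ Fin n) (hσ : c7 n (σ.symm ⟨0, h0⟩) = 0) :
      SW (Star n) (c7 n) σ = ((n : ℚ) - 3) + ((n : ℚ) - 3) / ((n : ℚ) - 1) := by
    rw [SW_star h0, hσ, card_c7_eq_zero, Nat.cast_sub (by omega)]
    ring
  have hq : (5 : ℚ) ≤ n := by exact_mod_cast hn
  have hinv : 0 ≤ 1 / ((n : ℚ) - 1) ∧ 1 / ((n : ℚ) - 1) ≤ 1 :=
    ⟨by bound, (div_le_one (by linarith)).mpr (by linarith)⟩
  refine ⟨⟨σB, by rw [hσB]; rfl, star_isEquilibrium h0 _ _, hSW_blue⟩, by linarith, hSW_red,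
    ?_, σB, σR, star_isEquilibrium h0 _ _, ?_⟩
  · have : 0 ≤ ((n : ℚ) - 3) / ((n : ℚ) - 1) := by bound
    linarith
  · rw [hSW_blue, hSW_red σR (by rw [hσR]; rfl),
      show ((n : ℚ) - 3) + ((n : ℚ) - 3) / ((n : ℚ) - 1) = ((n : ℚ) - 3) * (1 + 1 / ((n : ℚ) - 1))
        by ring]
    exact mul_le_mul_of_nonneg_right (by linarith) (by linarith)

end SwapGame
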